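/- For any function g : ℕ → ℝ, letting f(n,p) = E[g(X(n,p))], the second discrete difference in n satisfies f(n+2,p) - 2f(n+1,p) + f(n,p) = p² · E[g(2+X(n,p)) - 2g(1+X(n,p)) + g(X(n,p))]. -/

import Mathlib

/-!
Conditioning on the outcome of the last trial gives
`E g(X(n+1,p)) = p E g(X(n,p) + 1) + (1 - p) E g(X(n,p))`, that is, the first difference in `n`
is `p` times the expectation of the forward difference `Δ_[1] g`. Iterating once more gives the
second difference.
-/

open Finset

noncomputable def binExp (n : ℕ) (p : ℝ) (g : ℕ → ℝ) : ℝ :=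
  ∑ ℓ ∈ Finset.range (n + 1), (n.choose ℓ : ℝ) * p ^ ℓ * (1 - p) ^ (n - ℓ) * g ℓ

open scoped fwdDiff

lemma binExp_succ (n : ℕ) (p : ℝ) (g : ℕ → ℝ) :
    binExp (n + 1) p g = p * binExp n p (fun ℓ => g (ℓ + 1)) + (1 - p) * binExp n p g := by
  unfold binExp
  rw [sum_range_succ' (fun ℓ => ((n + 1).choose ℓ : ℝ) * p ^ ℓ * (1 - p) ^ (n + 1 - ℓ) * g ℓ),
    sum_range_succ' (fun ℓ => (n.choose ℓ : ℝ) * p ^ ℓ * (1 - p) ^ (n - ℓ) * g ℓ)]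
  simp only [Nat.choose_succ_succ', Nat.cast_add, Nat.choose_zero_right, Nat.succ_sub_succ,
    Nat.cast_one, pow_zero, Nat.sub_zero]
  have pascal_split : ∀ i ∈ range (n + 1),
      ((n.choose i : ℝ) + n.choose (i + 1)) * p ^ (i + 1) * (1 - p) ^ (n - i) * g (i + 1) =
        p * ((n.choose i : ℝ) * p ^ i * (1 - p) ^ (n - i) * g (i + 1)) +
          (n.choose (i + 1) : ℝ) * p ^ (i + 1) * (1 - p) ^ (n - i) * g (i + 1) :=
    fun i _ => by ring
  have failure_part : ∑ i ∈ range (n + 1),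
      (n.choose (i + 1) : ℝ) * p ^ (i + 1) * (1 - p) ^ (n - i) * g (i + 1) =
        (1 - p) * ∑ i ∈ range n,
          (n.choose (i + 1) : ℝ) * p ^ (i + 1) * (1 - p) ^ (n - (i + 1)) * g (i + 1) := by
    rw [sum_range_succ, Nat.choose_succ_self, Nat.cast_zero, zero_mul, zero_mul, zero_mul,
      add_zero, mul_sum]
    refine sum_congr rfl fun i hi => ?_
    rw [show n - i = n - (i + 1) + 1 by simp at hi; omega, pow_succ]
    ring
  rw [sum_congr rfl pascal_split, sum_add_distrib, ← mul_sum, failure_part]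
  ring

lemma binExp_sub (n : ℕ) (p : ℝ) (g h : ℕ → ℝ) :
    binExp n p (g - h) = binExp n p g - binExp n p h := by
  simp only [binExp, Pi.sub_apply, mul_sub, sum_sub_distrib]

lemma binExp_succ_sub_binExp (n : ℕ) (p : ℝ) (g : ℕ → ℝ) :
    binExp (n + 1) p g - binExp n p g = p * binExp n p (Δ_[1] g) := by
  have : Δ_[1] g = (fun ℓ => g (ℓ + 1)) - g := rfl
  rw [binExp_succ, this, binExp_sub]
  ring

theorem stmt4 (n : ℕ) (p : ℝ) (g : ℕ → ℝ) :
    binExp (n + 2) p g - 2 * binExp (n + 1) p g + binExp n p g =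
      p ^ 2 * binExp n p (fun ℓ => g (ℓ + 2) - 2 * g (ℓ + 1) + g ℓ) := by
  have second_fwdDiff : Δ_[1] (Δ_[1] g) = fun ℓ => g (ℓ + 2) - 2 * g (ℓ + 1) + g ℓ := by
    funext ℓ
    simp only [fwdDiff]
    ring_nf
  calc binExp (n + 2) p g - 2 * binExp (n + 1) p g + binExp n p g
      = (binExp (n + 1 + 1) p g - binExp (n + 1) p g) - (binExp (n + 1) p g - binExp n p g) := by
        ring
    _ = p * (binExp (n + 1) p (Δ_[1] g) - binExp n p (Δ_[1] g)) := by
        rw [binExp_succ_sub_binExp, binExp_succ_sub_binExp, mul_sub]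
    _ = p ^ 2 * binExp n p (fun ℓ => g (ℓ + 2) - 2 * g (ℓ + 1) + g ℓ) := by
        rw [binExp_succ_sub_binExp, second_fwdDiff]
        ring
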